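/- arXiv:2212.10373 — 2 statements merged into one kernel-verified Lean document; each statement's English description precedes it below -/
import Mathlib

section
/- Let $f \in \mathbb{Z}[t]$ be a separable polynomial of degree $d \geq 1$, let $p$ be a prime, $k \geq 1$, and let $\sigma$ be the $p$-adic valuation of the content of $f$. Let $\lambda_f(p^k)$ be the number of residues $u \bmod p^k$ such that $f(u) \equiv 0 \pmod{p^k}$. Then: if $\sigma \geq k$, $\lambda_f(p^k) = p^k$; and if $\sigma < k$, $\lambda_f(p^k) \leq d \cdot \min\{p^{k(1 - 1/d) + \sigma/d},\ p^{k-1}\}$. -/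
open Polynomial Finset

section helpers

lemma not_pdvd_one {p : ℕ} (hp : p.Prime) : ¬ (p:ℤ) ∣ (1:ℤ) := by
  intro h
  have h' : p ∣ 1 := by exact_mod_cast h
  exact hp.one_lt.ne' (Nat.dvd_one.mp h')

lemma padic_split {p : ℕ} (hp : p.Prime) {e : ℕ} {x : ℤ} (hx : ¬ (p:ℤ)^e ∣ x) :
    ∃ b : ℤ, ∃ tn : ℕ, tn + 1 ≤ e ∧ ¬ (p:ℤ) ∣ b ∧ x = (p:ℤ)^tn * b := by
  have hx0 : x ≠ 0 := by rintro rfl; exact hx (dvd_zero _)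
  set tn := x.natAbs.factorization p with htn
  have hxa : x.natAbs ≠ 0 := Int.natAbs_ne_zero.mpr hx0
  have h1 : (p:ℤ)^tn ∣ x := by
    have h := Nat.ordProj_dvd x.natAbs p
    have h' : ((p^tn : ℕ) : ℤ) ∣ (x.natAbs : ℤ) := Int.natCast_dvd_natCast.mpr h
    rw [Int.natAbs_dvd_natAbs.symm]
    simpa using h
  have h2 : ¬ (p:ℤ)^(tn+1) ∣ x := by
    intro h
    have hnd := Nat.pow_succ_factorization_not_dvd hxa hp
    apply hnd
    have h' : ((p^(tn+1) : ℕ) : ℤ) ∣ x := by push_cast; exact h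
    have h2' := Int.natAbs_dvd_natAbs.mpr h'
    rwa [Int.natAbs_natCast] at h2'
  obtain ⟨b, hb⟩ := h1
  refine ⟨b, tn, ?_, ?_, hb⟩
  · by_contra h
    push_neg at h
    exact hx (dvd_trans (pow_dvd_pow _ (by omega)) ⟨b, hb⟩)
  · intro ⟨c, hc⟩
    exact h2 ⟨c, by rw [hb, hc]; ring⟩

lemma prod_split {ι : Type*} {p : ℕ} (hp : p.Prime) {e : ℕ} (s : Finset ι) (x : ι → ℤ)
    (h : ∀ j ∈ s, ¬ (p:ℤ)^e ∣ x j) :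
    ∃ B : ℤ, ∃ T : ℕ, T ≤ s.card * (e-1) ∧ ¬ (p:ℤ) ∣ B ∧ ∏ j ∈ s, x j = (p:ℤ)^T * B := by
  classical
  induction s using Finset.cons_induction with
  | empty => exact ⟨1, 0, by simp, not_pdvd_one hp, by simp⟩
  | cons a s ha ih =>
    obtain ⟨B, T, hT, hB, hprod⟩ := ih (fun j hj => h j (mem_cons_of_mem hj))
    obtain ⟨b, t, ht, hb, hx⟩ := padic_split hp (h a (mem_cons_self a s))
    refine ⟨b * B, t + T, ?_, ?_, ?_⟩
    · have : t ≤ e - 1 := by omega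
      calc t + T ≤ (e-1) + s.card * (e-1) := by omega
        _ = (s.cons a ha).card * (e-1) := by rw [card_cons]; ring
    · intro hd
      rcases ((Nat.prime_iff_prime_int.mp hp).2.2 _ _ hd) with h' | h'
      exacts [hb h', hB h']
    · rw [prod_cons, hx, hprod, pow_add]; ring

def Good (p : ℕ) (s : ℕ) (x : ℚ) : Prop :=
  ∃ a b : ℤ, ¬ (p:ℤ) ∣ b ∧ x * (b:ℚ) = ((p:ℤ)^s * a : ℤ)

lemma good_zero {p s : ℕ} (hp : p.Prime) : Good p s 0 :=
  ⟨0, 1, not_pdvd_one hp, by simp⟩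

lemma good_add {p s : ℕ} (hp : p.Prime) {x y : ℚ} (hx : Good p s x) (hy : Good p s y) :
    Good p s (x + y) := by
  obtain ⟨a, b, hb, hab⟩ := hx
  obtain ⟨c, e, he, hce⟩ := hy
  refine ⟨a * e + c * b, b * e, ?_, ?_⟩
  · intro hd
    rcases ((Nat.prime_iff_prime_int.mp hp).2.2 _ _ hd) with h' | h'
    exacts [hb h', he h']
  · have key : (x+y) * ((b:ℚ) * (e:ℚ)) = (x * b) * e + (y * e) * b := by ring
    push_cast
    rw [key, hab, hce]
    push_cast
    ring

lemma good_sum {ι : Type*} {p s : ℕ} (hp : p.Prime) (t : Finset ι) (g : ι → ℚ)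
    (h : ∀ i ∈ t, Good p s (g i)) : Good p s (∑ i ∈ t, g i) := by
  classical
  induction t using Finset.cons_induction with
  | empty => simpa using good_zero hp
  | cons a t ha ih =>
    rw [sum_cons]
    exact good_add hp (h a (mem_cons_self a t)) (ih fun i hi => h i (mem_cons_of_mem hi))

lemma good_int {p s : ℕ} (hp : p.Prime) {c : ℤ} (h : Good p s (c:ℚ)) : (p:ℤ)^s ∣ c := by
  obtain ⟨a, b, hb, hab⟩ := h
  have : (c * b : ℤ) = (p:ℤ)^s * a := by exact_mod_cast hab
  have hdvd : (p:ℤ)^s ∣ c * b := ⟨a, this⟩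
  exact Prime.pow_dvd_of_dvd_mul_right (Nat.prime_iff_prime_int.mp hp) s hb hdvd

lemma ceil_exists {m d : ℕ} (hm : 1 ≤ m) (hd : 1 ≤ d) :
    ∃ e, 1 ≤ e ∧ d*(e-1) + 1 ≤ m ∧ m ≤ d*e := by
  refine ⟨(m-1)/d + 1, Nat.le_add_left _ _, ?_, ?_⟩
  · rw [Nat.add_sub_cancel]
    have h1 : d * ((m-1)/d) ≤ m - 1 := Nat.mul_div_le (m-1) d
    omega
  · have h1 := Nat.div_add_mod (m-1) d
    have h2 : (m-1) % d < d := Nat.mod_lt _ (by omega)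
    have h3 : d * ((m-1)/d + 1) = d*((m-1)/d) + d := by ring
    rw [h3]
    omega

lemma interp_key {p : ℕ} (hp : p.Prime) {f : Polynomial ℤ} {d k e s : ℕ}
    (hdeg : f.natDegree ≤ d) (u : Fin (d+1) → ℤ)
    (hroot : ∀ i, (p:ℤ)^k ∣ f.eval (u i))
    (hdist : ∀ i j, i ≠ j → ¬ (p:ℤ)^e ∣ (u i - u j))
    (hke : d * (e-1) + s ≤ k) :
    ∀ n, (p:ℤ)^s ∣ f.coeff n := by
  intro n
  set φ := Int.castRingHom ℚ with hφ
  set F := f.map φ with hF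
  set v : Fin (d+1) → ℚ := fun i => (u i : ℚ) with hv
  have huinj : Function.Injective u := by
    intro i j hij
    by_contra hne
    exact hdist i j hne (by rw [hij, sub_self]; exact dvd_zero _)
  have hvs : Set.InjOn v (Finset.univ : Finset (Fin (d+1))) := by
    intro i _ j _ hij
    exact huinj (Int.cast_injective hij)
  have hdegF : F.degree < ((Finset.univ : Finset (Fin (d+1))).card : ℕ) := by
    rw [Finset.card_univ, Fintype.card_fin]
    calc F.degree ≤ f.degree := Polynomial.degree_map_le
      _ ≤ (d : WithBot ℕ) := Polynomial.degree_le_of_natDegree_le hdeg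
      _ < ((d+1 : ℕ) : WithBot ℕ) := by exact_mod_cast WithBot.coe_lt_coe.mpr (Nat.lt_succ_self d)
  have hinterp := Lagrange.eq_interpolate hvs hdegF
  -- coefficient extraction
  have hcoeff : (f.coeff n : ℚ) =
      ∑ i : Fin (d+1), (C (F.eval (v i)) * Lagrange.basis Finset.univ v i).coeff n := by
    rw [← Polynomial.finset_sum_coeff]
    rw [← Lagrange.interpolate_apply, ← hinterp, hF, Polynomial.coeff_map]
    rfl
  rw [show ((p:ℤ)^s ∣ f.coeff n) ↔ Good p s ((f.coeff n : ℚ)) from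
    ⟨fun ⟨a, ha⟩ => ⟨a, 1, not_pdvd_one hp, by push_cast [ha]; ring⟩, good_int hp⟩]
  rw [hcoeff]
  apply good_sum hp
  intro i _
  -- analyze term i
  set N : Polynomial ℤ := ∏ j ∈ Finset.univ.erase i, (X - C (u j)) with hN
  set D : ℤ := ∏ j ∈ Finset.univ.erase i, (u i - u j) with hD
  have hbasis : Lagrange.basis Finset.univ v i = C ((D:ℚ))⁻¹ * (N.map φ) := by
    rw [Lagrange.basis]
    simp_rw [Lagrange.basisDivisor]
    rw [Finset.prod_mul_distrib]
    congr 1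
    · have hDc : ((D:ℤ):ℚ) = ∏ x ∈ Finset.univ.erase i, (v i - v x) := by
        rw [hD]; push_cast; rfl
      rw [hDc, ← Finset.prod_inv_distrib,
        map_prod (C : ℚ →+* Polynomial ℚ) (fun x => (v i - v x)⁻¹) (Finset.univ.erase i)]
    · rw [hN, Polynomial.map_prod]
      apply Finset.prod_congr rfl
      intro j _
      simp [hv, hφ, Polynomial.C_eq_intCast]
  have hFeval : F.eval (v i) = ((f.eval (u i) : ℤ) : ℚ) := by
    rw [hF, Polynomial.eval_map, hv]
    exact (Polynomial.eval₂_at_apply φ (u i)).symm ▸ rfl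
  obtain ⟨m, hm⟩ := hroot i
  obtain ⟨B, T, hT, hB, hDeq⟩ := prod_split hp (Finset.univ.erase i) (fun j => u i - u j)
    (fun j hj => hdist i j (fun h => (Finset.mem_erase.mp hj).1 h.symm))
  have hcard : (Finset.univ.erase i).card = d := by
    rw [Finset.card_erase_of_mem (Finset.mem_univ i), Finset.card_univ, Fintype.card_fin]
    omega
  have hTd : T ≤ d * (e-1) := hcard ▸ hT
  have hB0 : (B:ℚ) ≠ 0 := by
    intro h
    exact hB (by rw [show B = 0 by exact_mod_cast h]; exact dvd_zero _)
  have hterm : (C (F.eval (v i)) * Lagrange.basis Finset.univ v i).coeff n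
      = ((f.eval (u i) : ℤ) : ℚ) * ((D:ℚ))⁻¹ * ((N.coeff n : ℤ) : ℚ) := by
    rw [hbasis, hFeval, ← mul_assoc, ← Polynomial.C_mul, Polynomial.coeff_C_mul,
      Polynomial.coeff_map]
    simp only [eq_intCast]
    try (push_cast; ring)
  rw [hterm]
  refine ⟨(p:ℤ)^(k - s - T) * m * N.coeff n, B, hB, ?_⟩
  have hDQ : (D : ℚ) = (p:ℚ)^T * (B:ℚ) := by exact_mod_cast congrArg (Int.cast : ℤ → ℚ) hDeq
  have hpQ : ((p:ℚ))^T ≠ 0 := pow_ne_zero _ (by exact_mod_cast hp.pos.ne')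
  have hksplit : (p:ℚ)^k = (p:ℚ)^s * (p:ℚ)^(k-s-T) * (p:ℚ)^T := by
    rw [← pow_add, ← pow_add]
    congr 1
    omega
  rw [hm, hDQ]
  push_cast
  rw [hksplit, mul_inv]
  field_simp

end helpers

/-- Lemma 6.1 (Stewart): bounds for the number of roots of `f` modulo `p^k`. -/
theorem stmt_11 (f : Polynomial ℤ) (d : ℕ) (hd : f.natDegree = d) (hd1 : 1 ≤ d)
    (hsep : Squarefree (f.map (Int.castRingHom ℚ)))
    (p : ℕ) (hp : p.Prime) (k : ℕ) (hk : 1 ≤ k) :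
    (k ≤ f.content.natAbs.factorization p →
        Nat.card {u : ZMod (p ^ k) // Polynomial.aeval u f = 0} = p ^ k) ∧
    (f.content.natAbs.factorization p < k →
        (Nat.card {u : ZMod (p ^ k) // Polynomial.aeval u f = 0} : ℝ)
          ≤ (d : ℝ) * min
              ((p : ℝ) ^ ((k : ℝ) * (1 - 1 / (d : ℝ)) +
                (f.content.natAbs.factorization p : ℝ) / (d : ℝ)))
              ((p : ℝ) ^ (k - 1))) := by
  classical
  haveI : NeZero (p ^ k) := ⟨(pow_pos hp.pos k).ne'⟩
  have hf0 : f ≠ 0 := by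
    intro h
    rw [h, Polynomial.natDegree_zero] at hd
    omega
  set σ := f.content.natAbs.factorization p with hσdef
  constructor
  · -- part 1 : every residue is a root
    intro hkσ
    have hcna : f.content.natAbs ≠ 0 := by
      simp [Int.natAbs_ne_zero, Polynomial.content_eq_zero_iff, hf0]
    have hdvd : ∀ n, ((p:ℤ))^k ∣ f.coeff n := by
      intro n
      have h1 : p^k ∣ f.content.natAbs :=
        (Nat.Prime.pow_dvd_iff_le_factorization hp hcna).mpr hkσ
      have h2 : ((p^k : ℕ) : ℤ) ∣ f.content := dvd_trans (Int.natCast_dvd_natCast.mpr h1)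
        (Int.natAbs_dvd.mpr dvd_rfl)
      calc (p:ℤ)^k = ((p^k : ℕ) : ℤ) := by push_cast; ring
        _ ∣ f.content := h2
        _ ∣ f.coeff n := Polynomial.content_dvd_coeff n
    have hall : ∀ u : ZMod (p^k), Polynomial.aeval u f = 0 := by
      intro u
      rw [Polynomial.aeval_eq_sum_range]
      apply Finset.sum_eq_zero
      intro i _
      have hz : ((f.coeff i : ℤ) : ZMod (p^k)) = 0 := by
        rw [ZMod.intCast_zmod_eq_zero_iff_dvd]
        have := hdvd i
        push_cast
        push_cast at this
        exact this
      rw [zsmul_eq_mul, hz, zero_mul]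
    rw [Nat.card_congr (Equiv.subtypeUnivEquiv hall), Nat.card_eq_fintype_card, ZMod.card]
  · -- part 2
    intro hσk
    have hm1 : 1 ≤ k - σ := by omega
    obtain ⟨e, he1, hlow, hme⟩ := ceil_exists hm1 hd1
    have hmk : (k - σ) + σ = k := by omega
    have hde : d * (e - 1) + (σ + 1) ≤ k := by linarith
    have hek : e ≤ k := by
      have h1 : (e-1) ≤ d * (e-1) := Nat.le_mul_of_pos_left _ (by omega)
      have h2 : e - 1 + 1 = e := by omega
      linarith
    -- the root set
    set R : Finset (ZMod (p^k)) := Finset.univ.filter (fun u => Polynomial.aeval u f = 0)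
      with hR
    have hcard : Nat.card {u : ZMod (p^k) // Polynomial.aeval u f = 0} = R.card := by
      rw [Nat.card_eq_fintype_card, Fintype.card_subtype]
    set g : ZMod (p^k) → ℕ := fun x => x.val % p^e with hg
    -- roots as integers
    have hrootint : ∀ x ∈ R, (p:ℤ)^k ∣ f.eval ((x.val : ℤ)) := by
      intro x hx
      have hz : Polynomial.aeval x f = 0 := (Finset.mem_filter.mp hx).2
      have hcast : ((x.val : ℤ) : ZMod (p^k)) = x := by
        push_cast
        exact ZMod.natCast_rightInverse x
      have key : ((f.eval ((x.val : ℤ)) : ℤ) : ZMod (p^k)) = 0 := by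
        have h1 := Polynomial.eval₂_at_apply (Int.castRingHom (ZMod (p^k))) ((x.val : ℤ))
          (p := f)
        have h2 : Polynomial.aeval (((x.val : ℤ) : ZMod (p^k))) f
            = ((f.eval ((x.val : ℤ)) : ℤ) : ZMod (p^k)) := by
          rw [Polynomial.aeval_def]
          rw [show (algebraMap ℤ (ZMod (p^k))) = Int.castRingHom (ZMod (p^k)) from rfl]
          rw [show ((x.val : ℤ) : ZMod (p^k)) = (Int.castRingHom (ZMod (p^k))) ((x.val : ℤ))
            from rfl] at *
          rw [h1]
          rfl
        rw [← h2, hcast, hz]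
      rw [ZMod.intCast_zmod_eq_zero_iff_dvd] at key
      have : ((p^k : ℕ) : ℤ) = (p:ℤ)^k := by push_cast; ring
      rwa [this] at key
    -- the image of roots mod p^e has at most d elements
    have himg : (R.image g).card ≤ d := by
      by_contra hlt
      push_neg at hlt
      obtain ⟨T, hTsub, hTcard⟩ := Finset.exists_subset_card_eq (s := R.image g) (n := d+1) hlt
      have hex : ∀ a : T, ∃ x, x ∈ R ∧ g x = (a : ℕ) := by
        intro a
        have := hTsub a.2
        rw [Finset.mem_image] at this
        obtain ⟨x, hx1, hx2⟩ := this
        exact ⟨x, hx1, hx2⟩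
      choose x hxR hgx using hex
      have hcardT : Fintype.card T = d + 1 := by rw [Fintype.card_coe, hTcard]
      set ι := (Fintype.equivFinOfCardEq hcardT).symm with hι
      set u : Fin (d+1) → ℤ := fun i => (((x (ι i)).val : ℕ) : ℤ) with hu
      have hroot : ∀ i, (p:ℤ)^k ∣ f.eval (u i) := fun i => hrootint _ (hxR (ι i))
      have hdist : ∀ i j, i ≠ j → ¬ (p:ℤ)^e ∣ (u i - u j) := by
        intro i j hij hdvd
        have hιne : ι i ≠ ι j := fun h => hij ((Fintype.equivFinOfCardEq hcardT).symm.injective h)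
        have hane : ((ι i : ℕ)) ≠ ((ι j : ℕ)) := fun h => hιne (Subtype.ext h)
        apply hane
        rw [← hgx (ι i), ← hgx (ι j)]
        have hmodeq : (x (ι j)).val ≡ (x (ι i)).val [MOD p^e] := by
          rw [Nat.modEq_iff_dvd]
          have : ((p^e : ℕ) : ℤ) = (p:ℤ)^e := by push_cast; ring
          rw [this]
          exact hdvd
        exact hmodeq.symm
      have hdvdall := interp_key hp (le_of_eq hd) u hroot hdist hde
      have hcdvd : (p:ℤ)^(σ+1) ∣ f.content := by
        rw [Polynomial.dvd_content_iff_C_dvd, Polynomial.C_dvd_iff_dvd_coeff]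
        exact hdvdall
      have hna : p^(σ+1) ∣ f.content.natAbs := by
        have h := Int.natAbs_dvd_natAbs.mpr hcdvd
        rwa [Int.natAbs_pow, Int.natAbs_natCast] at h
      have hcna : f.content.natAbs ≠ 0 := by
        simp [Int.natAbs_ne_zero, Polynomial.content_eq_zero_iff, hf0]
      have := (Nat.Prime.pow_dvd_iff_le_factorization hp hcna).mp hna
      omega
    -- fibers have at most p^(k-e) elements
    have hfib : ∀ a ∈ R.image g, (R.filter (fun x => g x = a)).card ≤ p^(k-e) := by
      intro a _
      rw [← Finset.card_range (p^(k-e))]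
      apply Finset.card_le_card_of_injOn (fun x => x.val / p^e)
      · intro x hx
        rw [Finset.mem_coe, Finset.mem_range]
        have hlt : x.val < p^k := ZMod.val_lt x
        rw [Nat.div_lt_iff_lt_mul (pow_pos hp.pos e)]
        calc x.val < p^k := hlt
          _ = p^(k-e) * p^e := by rw [← pow_add]; congr 1; omega
      · intro x hx y hy hxy
        simp only [Finset.mem_coe, Finset.mem_filter] at hx hy
        have h1 : x.val % p^e = y.val % p^e := by
          have h := hx.2.trans hy.2.symm
          simpa [hg] using h
        have hq : x.val / p^e = y.val / p^e := by exact hxy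
        have hval : x.val = y.val := by
          conv_lhs => rw [← Nat.div_add_mod x.val (p^e)]
          conv_rhs => rw [← Nat.div_add_mod y.val (p^e)]
          rw [hq, h1]
        exact ZMod.val_injective _ hval
    have hcount : R.card ≤ p^(k-e) * d :=
      le_trans (Finset.card_le_mul_card_image R (p^(k-e)) hfib)
        (Nat.mul_le_mul_left _ himg)
    -- final real estimates
    rw [hcard]
    have hp1R : (1:ℝ) ≤ (p:ℝ) := by exact_mod_cast hp.one_lt.le
    have hpposR : (0:ℝ) < (p:ℝ) := by positivity
    have hdR : (0:ℝ) < (d:ℝ) := by exact_mod_cast hd1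
    have hbound1 : ((p:ℝ))^(k-e) ≤ (p:ℝ) ^ ((k : ℝ) * (1 - 1 / (d : ℝ)) + (σ : ℝ) / (d : ℝ)) := by
      rw [show ((p:ℝ))^(k-e) = (p:ℝ) ^ (((k-e : ℕ)) : ℝ) from (Real.rpow_natCast _ _).symm]
      apply Real.rpow_le_rpow_of_exponent_le hp1R
      have hcast : (((k-e:ℕ)) : ℝ) = (k:ℝ) - (e:ℝ) := by
        have : ((k:ℕ) - e) + e = k := by omega
        push_cast [Nat.cast_sub hek]
        ring
      rw [hcast]
      have hmR : (((k - σ : ℕ)) : ℝ) ≤ (d:ℝ) * (e:ℝ) := by exact_mod_cast hme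
      have hmR2 : ((k:ℝ) - (σ:ℝ)) = (((k - σ : ℕ)) : ℝ) := by
        push_cast [Nat.cast_sub (le_of_lt hσk)]
        ring
      have target : (k : ℝ) * (1 - 1 / (d : ℝ)) + (σ : ℝ) / (d : ℝ)
          = (k:ℝ) - ((k:ℝ) - (σ:ℝ)) / (d:ℝ) := by
        field_simp
        ring
      rw [target, hmR2]
      have : (((k - σ : ℕ)) :ℝ) / (d:ℝ) ≤ (e:ℝ) := by
        rw [div_le_iff₀ hdR]
        nlinarith [hmR]
      linarith
    have hbound2 : ((p:ℝ))^(k-e) ≤ (p:ℝ) ^ (k-1) := by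
      apply pow_le_pow_right₀ hp1R
      omega
    calc (R.card : ℝ) ≤ ((p^(k-e) * d : ℕ) : ℝ) := by exact_mod_cast hcount
      _ = (d:ℝ) * ((p:ℝ))^(k-e) := by push_cast; ring
      _ ≤ (d:ℝ) * min ((p : ℝ) ^ ((k : ℝ) * (1 - 1 / (d : ℝ)) + (σ : ℝ) / (d : ℝ)))
          ((p : ℝ) ^ (k - 1)) := by
        apply mul_le_mul_of_nonneg_left (le_min hbound1 hbound2) (le_of_lt hdR)
end

section
/- Let $e \geq 1$, let $\nf_K$ be the norm form of a degree-$e$ number field $K$, let $f \in \mathbb{Z}_p[t]$ be a polynomial, let $p$ be a prime and $k \geq 1$. Suppose there exist $\alpha \geq 0$ and $(\mathbf{x}_0, t_0) \in \mathbb{Z}_p^{e+1}$ with $\nf_K(\mathbf{x}_0) \equiv f(t_0) \pmod{p^k}$ and such that $p^\alpha$ exactly divides the vector $(\nabla \nf_K(\mathbf{x}_0), f'(t_0))$ (i.e., $\alpha$ is the minimum of the $p$-adic valuations of its entries). Define $\sigma(p^k) = p^{-ke}\, \#\{(\mathbf{x}, t) \in (\mathbb{Z}/p^k\mathbb{Z})^{e+1}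 : \nf_K(\mathbf{x}) \equiv f(t) \pmod{p^k}\}$. Then $\sigma(p^k) \geq p^{-(\alpha+1)e}$. -/
section Aux

variable {p : ℕ} [Fact p.Prime]

private lemma aux_dvd_iff_norm (x : ℤ_[p]) (n : ℕ) : (p:ℤ_[p])^n ∣ x ↔ ‖x‖ ≤ (p:ℝ)^(-n:ℤ) := by
  rw [PadicInt.norm_le_pow_iff_mem_span_pow, Ideal.mem_span_singleton]

private lemma aux_toZModPow_eq_zero_iff (x : ℤ_[p]) (n : ℕ) :
    PadicInt.toZModPow n x = 0 ↔ (p:ℤ_[p])^n ∣ x := by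
  rw [← RingHom.mem_ker, PadicInt.ker_toZModPow, Ideal.mem_span_singleton]

private lemma aux_norm_ge (x : ℤ_[p]) (α : ℕ) (h : ¬ (p:ℤ_[p])^(α+1) ∣ x) :
    (p:ℝ)^(-α:ℤ) ≤ ‖x‖ := by
  have hx : x ≠ 0 := by rintro rfl; exact h (dvd_zero _)
  rw [aux_dvd_iff_norm, not_le] at h
  rw [PadicInt.norm_eq_zpow_neg_valuation hx] at h ⊢
  have hp : (1:ℝ) < p := by exact_mod_cast (Fact.out : p.Prime).one_lt
  have := (zpow_lt_zpow_iff_right₀ hp).mp h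
  exact zpow_le_zpow_right₀ (le_of_lt hp) (by omega)

private lemma aux_norm_lt_dvd (x : ℤ_[p]) (α : ℕ) (h : ‖x‖ < (p:ℝ)^(-α:ℤ)) :
    (p:ℤ_[p])^(α+1) ∣ x := by
  rcases eq_or_ne x 0 with rfl | hx
  · exact dvd_zero _
  rw [aux_dvd_iff_norm]
  rw [PadicInt.norm_eq_zpow_neg_valuation hx] at h ⊢
  have hp : (1:ℝ) < p := by exact_mod_cast (Fact.out : p.Prime).one_lt
  have := (zpow_lt_zpow_iff_right₀ hp).mp h
  exact zpow_le_zpow_right₀ (le_of_lt hp) (by omega)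

end Aux

section ToPoly

variable {R : Type*} [CommRing R] {n : ℕ} {σ : Type*}

private noncomputable def toPolyAt (j : Fin n) (c : Fin n → R) (G : MvPolynomial (Fin n) R) :
    Polynomial R :=
  MvPolynomial.eval₂ Polynomial.C (fun i => if i = j then Polynomial.X else Polynomial.C (c i)) G

private lemma toPolyAt_eval (j : Fin n) (c : Fin n → R) (G : MvPolynomial (Fin n) R) (s : R) :
    (toPolyAt j c G).eval s = MvPolynomial.eval (Function.update c j s) G := by
  unfold toPolyAt
  rw [show Polynomial.eval s (MvPolynomial.eval₂ Polynomial.C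
        (fun i => if i = j then Polynomial.X else Polynomial.C (c i)) G)
      = (Polynomial.evalRingHom s) (MvPolynomial.eval₂ Polynomial.C
        (fun i => if i = j then Polynomial.X else Polynomial.C (c i)) G) from rfl,
    MvPolynomial.eval₂_comp_left (Polynomial.evalRingHom s) Polynomial.C _ G]
  have h1 : (Polynomial.evalRingHom s).comp Polynomial.C = RingHom.id R := by ext r; simp
  have h2 : ((Polynomial.evalRingHom s) ∘ fun i => if i = j then Polynomial.X
      else Polynomial.C (c i)) = Function.update c j s := by
    funext i
    by_cases h : i = j <;> simp [h, Function.update]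
  rw [h1, h2]
  rfl

private lemma toPolyAt_derivative (j : Fin n) (c : Fin n → R) (G : MvPolynomial (Fin n) R) :
    (toPolyAt j c G).derivative = toPolyAt j c (MvPolynomial.pderiv j G) := by
  induction G using MvPolynomial.induction_on with
  | C a => simp [toPolyAt]
  | add q r hq hr => simp [toPolyAt, MvPolynomial.eval₂_add, hq, hr] at *
  | mul_X q i hq =>
      simp only [toPolyAt, MvPolynomial.eval₂_mul, MvPolynomial.eval₂_X] at *
      rw [Polynomial.derivative_mul, hq]
      rw [MvPolynomial.pderiv_mul, MvPolynomial.pderiv_X]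
      simp only [MvPolynomial.eval₂_add, MvPolynomial.eval₂_mul, MvPolynomial.eval₂_X]
      by_cases h : i = j
      · subst h
        simp [Pi.single_apply]
      · simp [h, Pi.single_apply, Ne.symm h]

private lemma eval_congr_dvd (d : R) (y z : Fin n → R) (h : ∀ i, d ∣ y i - z i)
    (Q : MvPolynomial (Fin n) R) :
    d ∣ MvPolynomial.eval y Q - MvPolynomial.eval z Q := by
  induction Q using MvPolynomial.induction_on with
  | C a => simp
  | add q r hq hr => simpa [mul_add, add_sub_add_comm] using dvd_add hq hr
  | mul_X q i hq =>
      have : MvPolynomial.eval y (q * MvPolynomial.X i)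
          - MvPolynomial.eval z (q * MvPolynomial.X i)
          = MvPolynomial.eval y q * (y i - z i)
            + (MvPolynomial.eval y q - MvPolynomial.eval z q) * z i := by
        simp; ring
      rw [this]
      exact dvd_add (Dvd.dvd.mul_left (h i) _) (hq.mul_right _)

private lemma taylor_dvd (d0 d1 : R) (hd : d0 ∣ d1) (y z : Fin n → R)
    (h1 : ∀ i, d1 ∣ y i - z i) (Q : MvPolynomial (Fin n) R)
    (h0 : ∀ i, d0 ∣ MvPolynomial.eval z (MvPolynomial.pderiv i Q)) :
    d0 * d1 ∣ MvPolynomial.eval y Q - MvPolynomial.eval z Q := by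
  classical
  have key : ∀ S : Finset (Fin n),
      d0 * d1 ∣ MvPolynomial.eval (fun i => if i ∈ S then y i else z i) Q
        - MvPolynomial.eval z Q := by
    intro S
    induction S using Finset.induction_on with
    | empty => simp
    | @insert a S ha ih =>
        set c : Fin n → R := fun i => if i ∈ S then y i else z i with hc
        have hmix : (fun i => if i ∈ insert a S then y i else z i)
            = Function.update c a (y a) := by
          funext i
          by_cases hia : i = a
          · subst hia; simp [Function.update, ha]
          · simp [Function.update, hia, hc]
        have hca : c a = z a := by simp [hc, ha]
        obtain ⟨K, hK⟩ := Polynomial.binomExpansion (toPolyAt a c Q) (z a) (y a - z a)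
        rw [add_sub_cancel] at hK
        have e1 : (toPolyAt a c Q).eval (y a)
            = MvPolynomial.eval (Function.update c a (y a)) Q := toPolyAt_eval ..
        have e2 : (toPolyAt a c Q).eval (z a) = MvPolynomial.eval c Q := by
          rw [toPolyAt_eval, ← hca, Function.update_eq_self]
        have e3 : (toPolyAt a c Q).derivative.eval (z a)
            = MvPolynomial.eval c (MvPolynomial.pderiv a Q) := by
          rw [toPolyAt_derivative, toPolyAt_eval, ← hca, Function.update_eq_self]
        rw [hmix, ← e1, hK, e2, e3]
        have hder : d0 ∣ MvPolynomial.eval c (MvPolynomial.pderiv a Q) := by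
          have hcz := eval_congr_dvd d1 c z (fun i => by
            by_cases h : i ∈ S
            · simpa [hc, h] using h1 i
            · simp [hc, h]) (MvPolynomial.pderiv a Q)
          have : d0 ∣ MvPolynomial.eval c (MvPolynomial.pderiv a Q)
              - MvPolynomial.eval z (MvPolynomial.pderiv a Q) := hd.trans hcz
          simpa using dvd_add this (h0 a)
        have t1 : d0 * d1 ∣ MvPolynomial.eval c (MvPolynomial.pderiv a Q) * (y a - z a) :=
          mul_dvd_mul hder (h1 a)
        have t2 : d0 * d1 ∣ K * (y a - z a) ^ 2 := by
          have : d0 * d1 ∣ (y a - z a) ^ 2 := by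
            rw [sq]; exact mul_dvd_mul (hd.trans (h1 a)) (h1 a)
          exact this.mul_left K
        have := dvd_add (dvd_add ih t1) t2
        convert this using 1
        ring
  have := key Finset.univ
  simpa using this

private lemma pderiv_polypart_ne [DecidableEq σ] (t j : σ) (h : j ≠ t) (f : Polynomial R) :
    MvPolynomial.pderiv j (Polynomial.eval₂ MvPolynomial.C (MvPolynomial.X t) f) = 0 := by
  induction f using Polynomial.induction_on with
  | C a => simp
  | add q r hq hr => simp [Polynomial.eval₂_add, hq, hr]
  | monomial a m _ =>
      simp [Polynomial.eval₂_mul, Polynomial.eval₂_pow, MvPolynomial.pderiv_C_mul,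
        MvPolynomial.pderiv_pow, MvPolynomial.pderiv_X, Pi.single_apply, h]

private lemma pderiv_polypart_self [DecidableEq σ] (t : σ) (f : Polynomial R) :
    MvPolynomial.pderiv t (Polynomial.eval₂ MvPolynomial.C (MvPolynomial.X t) f)
      = Polynomial.eval₂ MvPolynomial.C (MvPolynomial.X t) (Polynomial.derivative f) := by
  induction f using Polynomial.induction_on with
  | C a => simp
  | add q r hq hr => simp [Polynomial.eval₂_add, hq, hr]
  | monomial a m _ =>
      simp only [Polynomial.eval₂_mul, Polynomial.eval₂_pow, Polynomial.eval₂_C,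
        Polynomial.eval₂_X, MvPolynomial.pderiv_C_mul, MvPolynomial.pderiv_pow,
        MvPolynomial.pderiv_X, Polynomial.derivative_mul, Polynomial.derivative_C,
        Polynomial.derivative_X_pow, Pi.single_eq_same]
      simp only [Polynomial.eval₂_add, Polynomial.eval₂_mul, Polynomial.eval₂_pow,
        Polynomial.eval₂_C, Polynomial.eval₂_X, Polynomial.eval₂_zero]
      simp only [map_add, map_one, map_natCast]
      push_cast
      ring

private lemma pderiv_rename_notmem {τ : Type*} [DecidableEq τ] {g : σ → τ} {j : τ}
    (h : ∀ x, g x ≠ j) (Q : MvPolynomial σ R) :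
    MvPolynomial.pderiv j (MvPolynomial.rename g Q) = 0 := by
  induction Q using MvPolynomial.induction_on with
  | C a => simp
  | add q r hq hr => simp [hq, hr]
  | mul_X q i hq =>
      simp [MvPolynomial.rename_X, MvPolynomial.pderiv_mul, hq, MvPolynomial.pderiv_X,
        Pi.single_apply, h i]

private lemma eval_polypart (t : σ) (f : Polynomial R) (s : σ → R) :
    MvPolynomial.eval s (Polynomial.eval₂ MvPolynomial.C (MvPolynomial.X t) f)
      = Polynomial.eval (s t) f := by
  rw [Polynomial.hom_eval₂]
  have h1 : (MvPolynomial.eval s).comp MvPolynomial.C = RingHom.id R := by ext r; simp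
  rw [h1]
  simp only [MvPolynomial.eval_X]
  rfl

private lemma map_polypart {S : Type*} [CommRing S] (φ : R →+* S) (t : σ) (f : Polynomial R) :
    MvPolynomial.map φ (Polynomial.eval₂ MvPolynomial.C (MvPolynomial.X t) f)
      = Polynomial.eval₂ MvPolynomial.C (MvPolynomial.X t) (f.map φ) := by
  rw [Polynomial.hom_eval₂]
  have h1 : (MvPolynomial.map φ (σ := σ)).comp MvPolynomial.C
      = MvPolynomial.C.comp φ := by ext r; simp
  rw [h1, ← Polynomial.eval₂_map]
  simp

end ToPoly
private lemma key_exists {p : ℕ} [Fact p.Prime] {n : ℕ} (k α : ℕ) (G : MvPolynomial (Fin n) ℤ_[p]) (z₀ : Fin n → ℤ_[p]) (j : Fin n)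
    (h0 : (p:ℤ_[p])^k ∣ MvPolynomial.eval z₀ G)
    (h1 : ∀ i, (p:ℤ_[p])^α ∣ MvPolynomial.eval z₀ (MvPolynomial.pderiv i G))
    (h2 : ¬ (p:ℤ_[p])^(α+1) ∣ MvPolynomial.eval z₀ (MvPolynomial.pderiv j G))
    (w : Fin n → ℤ_[p]) :
    ∃ s : Fin n → ℤ_[p], ((p:ℤ_[p])^k ∣ MvPolynomial.eval s G) ∧
      ∀ i, i ≠ j → s i = z₀ i + (p:ℤ_[p])^(α+1) * w i := by
  classical
  set y : Fin n → ℤ_[p] := fun i => z₀ i + (p:ℤ_[p])^(α+1) * (if i = j then 0 else w i) with hy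
  have hy1 : ∀ i, (p:ℤ_[p])^(α+1) ∣ y i - z₀ i := by
    intro i
    refine ⟨(if i = j then 0 else w i), ?_⟩
    simp [hy]
  have hyj : y j = z₀ j := by simp [hy]
  have hyne : ∀ i, i ≠ j → y i = z₀ i + (p:ℤ_[p])^(α+1) * w i := fun i hi => by simp [hy, hi]
  have htay : (p:ℤ_[p])^(2*α+1) ∣ MvPolynomial.eval y G - MvPolynomial.eval z₀ G := by
    have := taylor_dvd ((p:ℤ_[p])^α) ((p:ℤ_[p])^(α+1)) (pow_dvd_pow _ (by omega)) y z₀ hy1 G h1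
    rwa [← pow_add, show α + (α+1) = 2*α+1 by omega] at this
  -- derivative at y
  have hder_sub : (p:ℤ_[p])^(α+1) ∣ MvPolynomial.eval y (MvPolynomial.pderiv j G)
      - MvPolynomial.eval z₀ (MvPolynomial.pderiv j G) := eval_congr_dvd _ y z₀ hy1 _
  have hder_not : ¬ (p:ℤ_[p])^(α+1) ∣ MvPolynomial.eval y (MvPolynomial.pderiv j G) := by
    intro h
    exact h2 (by simpa using dvd_sub h hder_sub)
  have hder_dvd : (p:ℤ_[p])^α ∣ MvPolynomial.eval y (MvPolynomial.pderiv j G) := by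
    have := dvd_add ((pow_dvd_pow (p:ℤ_[p]) (by omega : α ≤ α+1)).trans hder_sub) (h1 j)
    simpa using this
  by_cases hcase : k ≤ 2*α + 1
  · refine ⟨y, ?_, hyne⟩
    have : (p:ℤ_[p])^k ∣ MvPolynomial.eval y G - MvPolynomial.eval z₀ G :=
      (pow_dvd_pow _ hcase).trans htay
    simpa using dvd_add this h0
  · -- Hensel case : k ≥ 2α+2
    push_neg at hcase
    set g : Polynomial ℤ_[p] := toPolyAt j y G with hg
    set a : ℤ_[p] := z₀ j with ha
    have hga : g.eval a = MvPolynomial.eval y G := by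
      rw [hg, toPolyAt_eval, ← hyj, Function.update_eq_self]
    have hg'a : g.derivative.eval a = MvPolynomial.eval y (MvPolynomial.pderiv j G) := by
      rw [hg, toPolyAt_derivative, toPolyAt_eval, ← hyj, Function.update_eq_self]
    have hp1 : (1:ℝ) < p := by exact_mod_cast (Fact.out : p.Prime).one_lt
    have hnorm_g : ‖g.eval a‖ ≤ (p:ℝ)^(-((2*α+1:ℕ)):ℤ) := by
      rw [hga, ← aux_dvd_iff_norm]
      have : (p:ℤ_[p])^(2*α+1) ∣ MvPolynomial.eval y G := by
        have := (pow_dvd_pow (p:ℤ_[p]) (by omega : 2*α+1 ≤ k)).trans h0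
        simpa using dvd_add htay this
      exact_mod_cast this
    have hnorm_g' : (p:ℝ)^(-α:ℤ) ≤ ‖g.derivative.eval a‖ := by
      rw [hg'a]; exact aux_norm_ge _ _ hder_not
    have hhyp : ‖g.eval a‖ < ‖g.derivative.eval a‖^2 := by
      calc ‖g.eval a‖ ≤ (p:ℝ)^(-((2*α+1:ℕ)):ℤ) := hnorm_g
        _ < (p:ℝ)^(-((2*α:ℕ)):ℤ) := by
            apply zpow_lt_zpow_right₀ hp1; push_cast; omega
        _ = ((p:ℝ)^(-(α:ℕ):ℤ))^2 := by
            rw [← zpow_natCast (((p:ℝ)^(-(α:ℕ):ℤ))) 2, ← zpow_mul]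
            congr 1
            push_cast; ring
        _ ≤ ‖g.derivative.eval a‖^2 := by
            apply pow_le_pow_left₀ (by positivity) hnorm_g'
    obtain ⟨z, hz0, hzdist, -, -⟩ := hensels_lemma hhyp
    have hzd : (p:ℤ_[p])^(α+1) ∣ z - a := by
      apply aux_norm_lt_dvd
      calc ‖z - a‖ < ‖g.derivative.eval a‖ := hzdist
        _ = ‖MvPolynomial.eval y (MvPolynomial.pderiv j G)‖ := by rw [hg'a]
        _ ≤ (p:ℝ)^(-α:ℤ) := by rw [← aux_dvd_iff_norm]; exact_mod_cast hder_dvd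
    refine ⟨Function.update y j z, ?_, fun i hi => by
      rw [Function.update_of_ne hi]; exact hyne i hi⟩
    have : MvPolynomial.eval (Function.update y j z) G = 0 := by
      rw [← toPolyAt_eval, ← hg]; simpa using hz0
    simp [this]

private lemma key_card {p : ℕ} [Fact p.Prime] {n : ℕ} (k α : ℕ) (G : MvPolynomial (Fin n) ℤ_[p]) (z₀ : Fin n → ℤ_[p]) (j : Fin n)
    (h0 : (p:ℤ_[p])^k ∣ MvPolynomial.eval z₀ G)
    (h1 : ∀ i, (p:ℤ_[p])^α ∣ MvPolynomial.eval z₀ (MvPolynomial.pderiv i G))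
    (h2 : ¬ (p:ℤ_[p])^(α+1) ∣ MvPolynomial.eval z₀ (MvPolynomial.pderiv j G)) :
    p ^ ((k - (α+1)) * (n - 1)) ≤ Nat.card {w : Fin n → ZMod (p^k) //
      MvPolynomial.eval w (MvPolynomial.map (PadicInt.toZModPow k) G) = 0} := by
  classical
  set m := k - (α + 1) with hm
  have hppos : 0 < p := (Fact.out : p.Prime).pos
  -- the lifts
  have hex : ∀ w : {i : Fin n // i ≠ j} → ZMod (p^m), ∃ s : Fin n → ℤ_[p],
      ((p:ℤ_[p])^k ∣ MvPolynomial.eval s G) ∧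
      ∀ i (hi : i ≠ j), s i = z₀ i + (p:ℤ_[p])^(α+1) * ((w ⟨i, hi⟩).val : ℤ_[p]) := by
    intro w
    obtain ⟨s, hs1, hs2⟩ := key_exists k α G z₀ j h0 h1 h2
      (fun i => if h : i = j then 0 else ((w ⟨i, h⟩).val : ℤ_[p]))
    exact ⟨s, hs1, fun i hi => by simpa [hi] using hs2 i hi⟩
  choose s hs1 hs2 using hex
  set Φ : ({i : Fin n // i ≠ j} → ZMod (p^m)) → {w : Fin n → ZMod (p^k) //
      MvPolynomial.eval w (MvPolynomial.map (PadicInt.toZModPow k) G) = 0} :=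
    fun w => ⟨fun i => PadicInt.toZModPow k (s w i), by
      rw [MvPolynomial.eval_map]
      have : MvPolynomial.eval₂ (PadicInt.toZModPow k)
          (fun i => PadicInt.toZModPow k (s w i)) G
          = PadicInt.toZModPow k (MvPolynomial.eval (s w) G) := by
        rw [← MvPolynomial.eval₂_id (g := s w) G,
          MvPolynomial.eval₂_comp_left (PadicInt.toZModPow k) (RingHom.id _) (s w) G]
        rfl
      rw [this, aux_toZModPow_eq_zero_iff]
      exact hs1 w⟩ with hΦ
  have hinj : Function.Injective Φ := by
    rcases le_or_gt k α with hkα | hkα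
    · -- m = 0, domain is subsingleton
      have hm0 : m = 0 := by omega
      have : Subsingleton (ZMod (p^m)) := by rw [hm0, pow_zero]; infer_instance
      intro a b _
      funext i
      exact Subsingleton.elim _ _
    · -- k ≥ α + 1
      have hkm : k = (α+1) + m := by omega
      intro a b hab
      funext i
      have hval : PadicInt.toZModPow k (s a i.1) = PadicInt.toZModPow k (s b i.1) := by
        have := congrArg Subtype.val hab
        exact congrFun this i.1
      rw [hs2 a i.1 i.2, hs2 b i.1 i.2] at hval
      rw [← sub_eq_zero, ← map_sub] at hval
      rw [aux_toZModPow_eq_zero_iff] at hval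
      have hsub : ((p:ℤ_[p]))^((α+1)+m) ∣ (p:ℤ_[p])^(α+1) *
          (((a i).val : ℤ_[p]) - ((b i).val : ℤ_[p])) := by
        have : z₀ i.1 + (p:ℤ_[p])^(α+1) * ((a i).val : ℤ_[p])
            - (z₀ i.1 + (p:ℤ_[p])^(α+1) * ((b i).val : ℤ_[p]))
            = (p:ℤ_[p])^(α+1) * (((a i).val : ℤ_[p]) - ((b i).val : ℤ_[p])) := by ring
        rw [← this, ← hkm]
        exact hval
      rw [pow_add] at hsub
      have hpne : ((p:ℤ_[p]))^(α+1) ≠ 0 := by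
        apply pow_ne_zero
        exact_mod_cast (Nat.cast_ne_zero (R := ℤ_[p])).mpr hppos.ne'
      have hdvd : ((p:ℤ_[p]))^m ∣ (((a i).val : ℤ_[p]) - ((b i).val : ℤ_[p])) :=
        (mul_dvd_mul_iff_left hpne).mp hsub
      have := (aux_toZModPow_eq_zero_iff _ m).mpr hdvd
      rw [map_sub, sub_eq_zero] at this
      have hcast : ∀ x : ℤ_[p], True := fun _ => trivial
      have hnat : ∀ c : ℕ, PadicInt.toZModPow (p := p) m ((c : ℤ_[p])) = (c : ZMod (p^m)) := by
        intro c; rw [map_natCast]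
      rw [hnat, hnat] at this
      have hne : NeZero (p ^ m) := ⟨pow_ne_zero _ hppos.ne'⟩
      have h1 := ZMod.natCast_rightInverse (n := p^m) (a i)
      have h2' := ZMod.natCast_rightInverse (n := p^m) (b i)
      rw [← h1, ← h2']
      exact this
  have hcard := Nat.card_le_card_of_injective Φ hinj
  refine le_trans ?_ hcard
  rw [Nat.card_fun]
  have c1 : Nat.card (ZMod (p^m)) = p^m := by
    have : NeZero (p ^ m) := ⟨pow_ne_zero _ hppos.ne'⟩
    simp [Nat.card_eq_fintype_card]
  have c2 : Nat.card {i : Fin n // i ≠ j} = n - 1 := by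
    rw [Nat.card_eq_fintype_card]
    simp [Fintype.card_subtype_compl]
  rw [c1, c2, ← pow_mul]


/-- Lemma 9.6: a Hensel-type lower bound for local densities of `N_K(x) = f(t)`. -/
theorem stmt_16 (K : Type*) [Field K] [NumberField K] (e : ℕ) (he : 1 ≤ e)
    (hrank : Module.finrank ℚ K = e)
    (ω : Module.Basis (Fin e) ℤ (NumberField.RingOfIntegers K))
    (N : MvPolynomial (Fin e) ℤ)
    (hN : ∀ s : Fin e → ℤ, MvPolynomial.eval s N = Algebra.norm ℤ (∑ i, s i • ω i))
    (p : ℕ) [Fact p.Prime] (k : ℕ) (hk : 1 ≤ k)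
    (f : Polynomial ℤ_[p]) (α : ℕ)
    (x₀ : Fin e → ℤ_[p]) (t₀ : ℤ_[p])
    (hsol : (p : ℤ_[p]) ^ k ∣ MvPolynomial.aeval x₀ N - Polynomial.eval t₀ f)
    (hdvd : (∀ i, (p : ℤ_[p]) ^ α ∣ MvPolynomial.aeval x₀ (MvPolynomial.pderiv i N)) ∧
      (p : ℤ_[p]) ^ α ∣ Polynomial.eval t₀ (Polynomial.derivative f))
    (hexact : (∃ i, ¬ (p : ℤ_[p]) ^ (α + 1) ∣
        MvPolynomial.aeval x₀ (MvPolynomial.pderiv i N)) ∨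
      ¬ (p : ℤ_[p]) ^ (α + 1) ∣ Polynomial.eval t₀ (Polynomial.derivative f)) :
    ((p : ℝ) ^ (k * e))⁻¹ *
        (Nat.card {xt : (Fin e → ZMod (p ^ k)) × ZMod (p ^ k) //
          MvPolynomial.eval xt.1 (MvPolynomial.map (Int.castRingHom (ZMod (p ^ k))) N)
            = Polynomial.eval xt.2 (f.map (PadicInt.toZModPow k))} : ℝ)
      ≥ ((p : ℝ) ^ ((α + 1) * e))⁻¹ := by
  classical
  have hp : p.Prime := Fact.out
  haveI : NeZero (p ^ k) := ⟨pow_ne_zero _ hp.pos.ne'⟩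
  set ι : ℤ →+* ℤ_[p] := Int.castRingHom ℤ_[p] with hι
  set G : MvPolynomial (Fin (e+1)) ℤ_[p] :=
    MvPolynomial.rename Fin.castSucc (MvPolynomial.map ι N)
      - Polynomial.eval₂ MvPolynomial.C (MvPolynomial.X (Fin.last e)) f with hG
  -- evaluation of G
  have heval : ∀ s : Fin (e+1) → ℤ_[p], MvPolynomial.eval s G
      = MvPolynomial.aeval (s ∘ Fin.castSucc) N - Polynomial.eval (s (Fin.last e)) f := by
    intro s
    rw [hG, map_sub, MvPolynomial.eval_rename, MvPolynomial.eval_map, eval_polypart,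
      MvPolynomial.aeval_def, algebraMap_int_eq]
  -- partial derivatives of G : x-directions
  have hpdc : ∀ i : Fin e, MvPolynomial.pderiv (Fin.castSucc i) G
      = MvPolynomial.rename Fin.castSucc (MvPolynomial.map ι (MvPolynomial.pderiv i N)) := by
    intro i
    rw [hG, map_sub, MvPolynomial.pderiv_rename (Fin.castSucc_injective e),
      MvPolynomial.pderiv_map, pderiv_polypart_ne _ _ (Fin.castSucc_lt_last i).ne]
    simp
  have hpdc' : ∀ (i : Fin e) (s : Fin (e+1) → ℤ_[p]),
      MvPolynomial.eval s (MvPolynomial.pderiv (Fin.castSucc i) G)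
        = MvPolynomial.aeval (s ∘ Fin.castSucc) (MvPolynomial.pderiv i N) := by
    intro i s
    rw [hpdc i, MvPolynomial.eval_rename, MvPolynomial.eval_map,
      MvPolynomial.aeval_def, algebraMap_int_eq]
  -- partial derivative of G : t-direction
  have hpdl : ∀ s : Fin (e+1) → ℤ_[p],
      MvPolynomial.eval s (MvPolynomial.pderiv (Fin.last e) G)
        = - Polynomial.eval (s (Fin.last e)) (Polynomial.derivative f) := by
    intro s
    rw [hG, map_sub, pderiv_rename_notmem (fun x => (Fin.castSucc_lt_last x).ne),
      pderiv_polypart_self]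
    rw [map_sub, eval_polypart]
    simp
  -- base point
  set z₀ : Fin (e+1) → ℤ_[p] := Fin.snoc x₀ t₀ with hz₀
  have hzc : z₀ ∘ Fin.castSucc = x₀ := by
    funext i; simp [hz₀]
  have hzl : z₀ (Fin.last e) = t₀ := by simp [hz₀]
  have h0 : (p:ℤ_[p])^k ∣ MvPolynomial.eval z₀ G := by
    rw [heval, hzc, hzl]; exact hsol
  have h1 : ∀ i, (p:ℤ_[p])^α ∣ MvPolynomial.eval z₀ (MvPolynomial.pderiv i G) := by
    intro i
    induction i using Fin.lastCases with
    | last => rw [hpdl, hzl]; exact (dvd_neg).mpr hdvd.2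
    | cast i => rw [hpdc' i, hzc]; exact hdvd.1 i
  have h2 : ∃ j, ¬ (p:ℤ_[p])^(α+1) ∣ MvPolynomial.eval z₀ (MvPolynomial.pderiv j G) := by
    rcases hexact with ⟨i, hi⟩ | ht
    · exact ⟨Fin.castSucc i, by rw [hpdc' i, hzc]; exact hi⟩
    · exact ⟨Fin.last e, by rw [hpdl, hzl]; exact fun h => ht ((dvd_neg).mp h)⟩
  obtain ⟨j, hj⟩ := h2
  have hcard := key_card k α G z₀ j h0 h1 hj
  -- the injection from the abstract solution set to the concrete one
  set T := {xt : (Fin e → ZMod (p ^ k)) × ZMod (p ^ k) //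
      MvPolynomial.eval xt.1 (MvPolynomial.map (Int.castRingHom (ZMod (p ^ k))) N)
        = Polynomial.eval xt.2 (f.map (PadicInt.toZModPow k))} with hT
  have hmapG : MvPolynomial.map (PadicInt.toZModPow k) G
      = MvPolynomial.rename Fin.castSucc
          (MvPolynomial.map (Int.castRingHom (ZMod (p^k))) N)
        - Polynomial.eval₂ MvPolynomial.C (MvPolynomial.X (Fin.last e))
            (f.map (PadicInt.toZModPow k)) := by
    have hcomp : (PadicInt.toZModPow k).comp ι = Int.castRingHom (ZMod (p^k)) :=
      RingHom.ext_int _ _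
    rw [hG, map_sub, MvPolynomial.map_rename, MvPolynomial.map_map, hcomp, map_polypart]
  have hpred : ∀ w : Fin (e+1) → ZMod (p^k),
      MvPolynomial.eval w (MvPolynomial.map (PadicInt.toZModPow k) G) = 0 ↔
      MvPolynomial.eval (w ∘ Fin.castSucc)
          (MvPolynomial.map (Int.castRingHom (ZMod (p ^ k))) N)
        = Polynomial.eval (w (Fin.last e)) (f.map (PadicInt.toZModPow k)) := by
    intro w
    rw [hmapG, map_sub, MvPolynomial.eval_rename, eval_polypart, sub_eq_zero]
  set ψ : {w : Fin (e+1) → ZMod (p^k) //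
      MvPolynomial.eval w (MvPolynomial.map (PadicInt.toZModPow k) G) = 0} → T :=
    fun w => ⟨(w.1 ∘ Fin.castSucc, w.1 (Fin.last e)), (hpred w.1).mp w.2⟩ with hψ
  have hψinj : Function.Injective ψ := by
    rintro ⟨a, ha⟩ ⟨b, hb⟩ hab
    have h1' : a ∘ Fin.castSucc = b ∘ Fin.castSucc := congrArg (fun t => t.1.1) hab
    have h2' : a (Fin.last e) = b (Fin.last e) := congrArg (fun t => t.1.2) hab
    refine Subtype.ext ?_
    funext i
    induction i using Fin.lastCases with
    | last => exact h2'
    | cast i => exact congrFun h1' i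
  have hcard2 := Nat.card_le_card_of_injective ψ hψinj
  have hTcard : (p:ℕ) ^ ((k - (α+1)) * e) ≤ Nat.card T := by
    refine le_trans ?_ (le_trans hcard hcard2)
    simp
  -- final arithmetic
  have hppos : (0:ℝ) < p := by exact_mod_cast hp.pos
  have hp1 : (1:ℝ) ≤ p := by exact_mod_cast hp.one_lt.le
  rw [ge_iff_le, le_inv_mul_iff₀ (by positivity)]
  have hcast : ((p:ℝ)) ^ ((k - (α+1)) * e) ≤ (Nat.card T : ℝ) := by
    exact_mod_cast hTcard
  calc (p:ℝ) ^ (k * e) * ((p:ℝ) ^ ((α + 1) * e))⁻¹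
      ≤ (p:ℝ) ^ ((k - (α+1)) * e) := by
        rw [mul_inv_le_iff₀ (by positivity), ← pow_add]
        apply pow_le_pow_right₀ hp1
        have : k ≤ (k - (α+1)) + (α+1) := by omega
        calc k * e ≤ ((k - (α+1)) + (α+1)) * e := Nat.mul_le_mul_right e this
          _ = (k - (α + 1)) * e + (α + 1) * e := by ring
    _ ≤ (Nat.card T : ℝ) := hcast
end
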